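/- arXiv:1010.2705 — 5 statements merged into one kernel-verified Lean document; each statement's English description precedes it below -/
import Mathlib

section
/- Let (X, ρ) and (Y, σ) be metric spaces, let f : X → Y be Lipschitz with constant C ≥ 0, let β ≥ 0, and let μ be a Borel measure on Y such that for every x ∈ X the normalizing integral Z(x) = ∫_Y e^{−β·σ(f(x),y)} dμ(y) is finite and strictly positive. Define the conventional exponential mechanism by C_x(T) = (∫_T e^{−β·σ(f(x),y)} dμ(y)) / Z(x) for Borel sets T ⊆ Y. Then C is (2Cβ)-differentially private: for all x, z ∈ X and all Borel T ⊆ Y, C_x(T) ≤ e^{2Cβ·ρ(x,z)} · C_z(T). -/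
open MeasureTheory ENNReal

/-! The density `y ↦ exp (-β σ(p, y))` changes by at most the factor `exp (β σ(p, q))` when its
centre moves from `p` to `q` (triangle inequality). Both the numerator and the normalizer of the
mechanism move by this factor, in opposite directions, so the normalized measures differ by at most
`exp (2β σ(f x, f z)) ≤ exp (2Cβ ρ(x, z))`. -/

theorem ENNReal.div_le_mul_mul_div {a b Z Z' k : ℝ≥0∞} (hab : a ≤ k * b) (hZ : Z' ≤ k * Z)
    (hZ0 : Z ≠ 0) (hZtop : Z ≠ ⊤) (hZ'0 : Z' ≠ 0) (hZ'top : Z' ≠ ⊤) :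
    a / Z ≤ k * k * (b / Z') := by
  rw [ENNReal.div_le_iff_le_mul (Or.inl hZ0) (Or.inl hZtop)]
  calc a ≤ k * b := hab
    _ = k * (b / Z' * Z') := by rw [ENNReal.div_mul_cancel hZ'0 hZ'top]
    _ ≤ k * (b / Z' * (k * Z)) := by gcongr
    _ = k * k * (b / Z') * Z := by ring

section ExponentialDensity

variable {Y : Type*} [PseudoMetricSpace Y] {β : ℝ}

theorem ofReal_exp_neg_mul_dist_le (hβ : 0 ≤ β) (p q y : Y) :
    ENNReal.ofReal (Real.exp (-β * dist p y)) ≤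
      ENNReal.ofReal (Real.exp (β * dist p q)) * ENNReal.ofReal (Real.exp (-β * dist q y)) := by
  rw [← ENNReal.ofReal_mul (Real.exp_nonneg _), ← Real.exp_add]
  gcongr
  nlinarith [dist_triangle q p y, dist_comm p q]

theorem lintegral_exp_neg_mul_dist_le [MeasurableSpace Y] (ν : Measure Y) (hβ : 0 ≤ β)
    (p q : Y) :
    ∫⁻ y, ENNReal.ofReal (Real.exp (-β * dist p y)) ∂ν ≤
      ENNReal.ofReal (Real.exp (β * dist p q)) *
        ∫⁻ y, ENNReal.ofReal (Real.exp (-β * dist q y)) ∂ν := by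
  rw [← lintegral_const_mul' _ _ ofReal_ne_top]
  exact lintegral_mono fun y => ofReal_exp_neg_mul_dist_le hβ p q y

theorem setLIntegral_div_lintegral_exp_neg_mul_dist_le [MeasurableSpace Y] (μ : Measure Y) (hβ : 0 ≤ β) (p q : Y)
    (hp0 : ∫⁻ y, ENNReal.ofReal (Real.exp (-β * dist p y)) ∂μ ≠ 0)
    (hptop : ∫⁻ y, ENNReal.ofReal (Real.exp (-β * dist p y)) ∂μ ≠ ⊤)
    (hq0 : ∫⁻ y, ENNReal.ofReal (Real.exp (-β * dist q y)) ∂μ ≠ 0)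
    (hqtop : ∫⁻ y, ENNReal.ofReal (Real.exp (-β * dist q y)) ∂μ ≠ ⊤) (T : Set Y) :
    (∫⁻ y in T, ENNReal.ofReal (Real.exp (-β * dist p y)) ∂μ) /
        ∫⁻ y, ENNReal.ofReal (Real.exp (-β * dist p y)) ∂μ ≤
      ENNReal.ofReal (Real.exp (2 * β * dist p q)) *
        ((∫⁻ y in T, ENNReal.ofReal (Real.exp (-β * dist q y)) ∂μ) /
          ∫⁻ y, ENNReal.ofReal (Real.exp (-β * dist q y)) ∂μ) := by
  have hsq : ENNReal.ofReal (Real.exp (2 * β * dist p q)) =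
      ENNReal.ofReal (Real.exp (β * dist p q)) * ENNReal.ofReal (Real.exp (β * dist p q)) := by
    rw [← ENNReal.ofReal_mul (Real.exp_nonneg _), ← Real.exp_add]
    ring_nf
  rw [hsq]
  refine ENNReal.div_le_mul_mul_div (lintegral_exp_neg_mul_dist_le _ hβ p q) ?_ hp0 hptop hq0 hqtop
  simpa only [dist_comm q p] using lintegral_exp_neg_mul_dist_le μ hβ q p

end ExponentialDensity

theorem exp_mech_diff_private_general {X Y : Type*} [MetricSpace X] [MetricSpace Y]
    [MeasurableSpace Y]
    (f : X → Y) (C : ℝ)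
    (hf : ∀ x z : X, dist (f x) (f z) ≤ C * dist x z)
    (μ : Measure Y) (β : ℝ) (hβ : 0 ≤ β)
    (Z : X → ℝ≥0∞)
    (hZ : ∀ x, Z x = ∫⁻ y, ENNReal.ofReal (Real.exp (-β * dist (f x) y)) ∂μ)
    (hZpos : ∀ x, 0 < Z x) (hZfin : ∀ x, Z x < ⊤)
    (x z : X) (T : Set Y) :
    (∫⁻ y in T, ENNReal.ofReal (Real.exp (-β * dist (f x) y)) ∂μ) / Z x ≤
      ENNReal.ofReal (Real.exp (2 * C * β * dist x z)) *
        ((∫⁻ y in T, ENNReal.ofReal (Real.exp (-β * dist (f z) y)) ∂μ) / Z z) := by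
  have hZ0 : ∀ x, Z x ≠ 0 := fun x => (hZpos x).ne'
  have hZtop : ∀ x, Z x ≠ ⊤ := fun x => (hZfin x).ne
  simp only [hZ] at hZ0 hZtop ⊢
  calc _ ≤ ENNReal.ofReal (Real.exp (2 * β * dist (f x) (f z))) * _ :=
        setLIntegral_div_lintegral_exp_neg_mul_dist_le μ hβ (f x) (f z) (hZ0 x) (hZtop x) (hZ0 z) (hZtop z) T
    _ ≤ _ := by
      gcongr ENNReal.ofReal (Real.exp ?_) * _
      nlinarith [hf x z]

/-- the conventional exponential mechanism built from a Lipschitz(C) function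
`f`, a Borel measure `μ` with finite positive normalizing integrals, and parameter `β ≥ 0`
is `(2Cβ)`-differentially private. -/
theorem exp_mech_diff_private {X Y : Type*} [MetricSpace X] [MetricSpace Y]
    [MeasurableSpace Y] [BorelSpace Y]
    (f : X → Y) (C : ℝ) (hC : 0 ≤ C)
    (hf : ∀ x z : X, dist (f x) (f z) ≤ C * dist x z)
    (μ : Measure Y) (β : ℝ) (hβ : 0 ≤ β)
    (Z : X → ℝ≥0∞)
    (hZ : ∀ x, Z x = ∫⁻ y, ENNReal.ofReal (Real.exp (-β * dist (f x) y)) ∂μ)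
    (hZpos : ∀ x, 0 < Z x) (hZfin : ∀ x, Z x < ⊤)
    (x z : X) (T : Set Y) (hT : MeasurableSet T) :
    (∫⁻ y in T, ENNReal.ofReal (Real.exp (-β * dist (f x) y)) ∂μ) / Z x ≤
      ENNReal.ofReal (Real.exp (2 * C * β * dist x z)) *
        ((∫⁻ y in T, ENNReal.ofReal (Real.exp (-β * dist (f z) y)) ∂μ) / Z z) :=
  exp_mech_diff_private_general f C hf μ β hβ Z hZ hZpos hZfin x z T
end

section
/- Let (X, ρ) and (Y, σ) be metric spaces, let f : X → Y be any function, and let μ be a uniformly positive Borel probability measure on Y. Fix γ > 0 and δ ∈ (0,1), set m = inf_{y ∈ Y} μ(B(y, γ/2)) (so m > 0 and we assume δ·m < 1), and set β = (2/γ)·ln(1/(δ·m)). Then the conventional exponential mechanism C^{μ;β} is well defined and achieves (γ,δ)-utility: for every x ∈ X, C_x(B(f(x), γ)) ≥ 1 − δ, where B(y,r) denotes the open ball of radius r around y in (Y, σ). -/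
/-!
Put `a = exp (-β γ / 2) = δ m`. The weight `exp (-β · dist (f x) y)` is at least `a` on the ball of
radius `γ / 2`, which has mass at least `m`, so the mass of the ball of radius `γ` is at least
`a m`; outside that ball the weight is at most `a² = δ · a m`. Hence the tail is at most `δ` times
the mass of the ball, which gives the ratio bound `1 - δ`.
-/

open MeasureTheory Metric
open scoped ENNReal

theorem ENNReal.one_sub_le_div_add_of_le_mul {N T δ : ℝ≥0∞} (hTN : T ≤ δ * N)
    (hNT₀ : N + T ≠ 0) (hNT : N + T ≠ ∞) : 1 - δ ≤ N / (N + T) := by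
  rcases le_total 1 δ with hδ | hδ
  · simp [tsub_eq_zero_of_le hδ]
  rw [ENNReal.le_div_iff_mul_le (Or.inl hNT₀) (Or.inl hNT)]
  calc (1 - δ) * (N + T) = (1 - δ) * N + (1 - δ) * T := mul_add _ _ _
    _ ≤ (1 - δ) * N + δ * N :=
      add_le_add_right ((mul_le_of_le_one_left' tsub_le_self).trans hTN) _
    _ = N := by rw [← add_mul, tsub_add_cancel_of_le hδ, one_mul]

/-- The unnormalized density of `C^{μ;β}_x` with respect to `μ`, where `c = f x`. -/
noncomputable def expWeight {Y : Type*} [PseudoMetricSpace Y] (β : ℝ) (c y : Y) : ℝ≥0∞ :=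
  ENNReal.ofReal (Real.exp (-β * dist c y))

section expWeight

variable {Y : Type*} [PseudoMetricSpace Y] {β : ℝ} {c : Y}

theorem expWeight_pos (β : ℝ) (c y : Y) : 0 < expWeight β c y :=
  ENNReal.ofReal_pos.2 (Real.exp_pos _)

theorem expWeight_le_of_le_dist (hβ : 0 ≤ β) {r : ℝ} {y : Y} (h : r ≤ dist c y) :
    expWeight β c y ≤ ENNReal.ofReal (Real.exp (-β * r)) :=
  ENNReal.ofReal_le_ofReal (Real.exp_le_exp.2 (by nlinarith))

theorem le_expWeight_of_dist_le (hβ : 0 ≤ β) {r : ℝ} {y : Y} (h : dist c y ≤ r) :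
    ENNReal.ofReal (Real.exp (-β * r)) ≤ expWeight β c y :=
  ENNReal.ofReal_le_ofReal (Real.exp_le_exp.2 (by nlinarith))

theorem expWeight_le_one (hβ : 0 ≤ β) (y : Y) : expWeight β c y ≤ 1 := by
  simpa using expWeight_le_of_le_dist hβ (dist_nonneg : 0 ≤ dist c y)

variable [MeasurableSpace Y] (μ : Measure Y)

theorem lintegral_expWeight_ne_top [IsFiniteMeasure μ] (hβ : 0 ≤ β) :
    ∫⁻ y, expWeight β c y ∂μ ≠ ∞ :=
  ne_top_of_le_ne_top (measure_ne_top μ Set.univ)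
    ((lintegral_mono (expWeight_le_one hβ)).trans_eq lintegral_one)

theorem setLIntegral_compl_ball_expWeight_le [IsProbabilityMeasure μ] (hβ : 0 ≤ β) (R : ℝ) :
    ∫⁻ y in (ball c R)ᶜ, expWeight β c y ∂μ ≤ ENNReal.ofReal (Real.exp (-β * R)) :=
  calc ∫⁻ y in (ball c R)ᶜ, expWeight β c y ∂μ
      ≤ ∫⁻ _ in (ball c R)ᶜ, ENNReal.ofReal (Real.exp (-β * R)) ∂μ :=
        setLIntegral_mono measurable_const fun _ hy =>
          expWeight_le_of_le_dist hβ (not_lt.1 (mt mem_ball'.2 hy))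
    _ ≤ ENNReal.ofReal (Real.exp (-β * R)) := by
      rw [setLIntegral_const]; exact mul_le_of_le_one_right' prob_le_one

variable [OpensMeasurableSpace Y]

theorem measurable_expWeight (β : ℝ) (c : Y) : Measurable (expWeight β c) :=
  (ENNReal.continuous_ofReal.comp (Real.continuous_exp.comp
    (continuous_const.mul (continuous_const.dist continuous_id)))).measurable

theorem lintegral_expWeight_ne_zero [NeZero μ] (β : ℝ) (c : Y) :
    ∫⁻ y, expWeight β c y ∂μ ≠ 0 := by
  rw [Ne, lintegral_eq_zero_iff (measurable_expWeight β c)]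
  intro h
  obtain ⟨y, hy⟩ := h.exists
  exact (expWeight_pos β c y).ne' hy

theorem mul_measure_ball_le_setLIntegral_expWeight (hβ : 0 ≤ β) {r R : ℝ} (hrR : r ≤ R) :
    ENNReal.ofReal (Real.exp (-β * r)) * μ (ball c r) ≤ ∫⁻ y in ball c R, expWeight β c y ∂μ :=
  calc ENNReal.ofReal (Real.exp (-β * r)) * μ (ball c r)
      = ∫⁻ _ in ball c r, ENNReal.ofReal (Real.exp (-β * r)) ∂μ := (setLIntegral_const _ _).symm
    _ ≤ ∫⁻ y in ball c r, expWeight β c y ∂μ :=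
      setLIntegral_mono (measurable_expWeight β c) fun _ hy =>
        le_expWeight_of_dist_le hβ (mem_ball'.1 hy).le
    _ ≤ ∫⁻ y in ball c R, expWeight β c y ∂μ := lintegral_mono_set (ball_subset_ball hrR)

theorem setLIntegral_compl_ball_expWeight_le_mul [IsProbabilityMeasure μ] {γ : ℝ} {δ : ℝ≥0∞}
    (hβ : 0 ≤ β) (hγ : 0 ≤ γ)
    (hδ : ENNReal.ofReal (Real.exp (-β * (γ / 2))) ≤ δ * μ (ball c (γ / 2))) :
    ∫⁻ y in (ball c γ)ᶜ, expWeight β c y ∂μ ≤ δ * ∫⁻ y in ball c γ, expWeight β c y ∂μ := by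
  set a := ENNReal.ofReal (Real.exp (-β * (γ / 2)))
  calc ∫⁻ y in (ball c γ)ᶜ, expWeight β c y ∂μ ≤ ENNReal.ofReal (Real.exp (-β * γ)) :=
        setLIntegral_compl_ball_expWeight_le μ hβ γ
    _ = a * a := by rw [← ENNReal.ofReal_mul (Real.exp_pos _).le, ← Real.exp_add]; ring_nf
    _ ≤ a * (δ * μ (ball c (γ / 2))) := by gcongr
    _ = δ * (a * μ (ball c (γ / 2))) := mul_left_comm _ _ _
    _ ≤ δ * ∫⁻ y in ball c γ, expWeight β c y ∂μ := by
      gcongr; exact mul_measure_ball_le_setLIntegral_expWeight μ hβ (by linarith)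

theorem one_sub_le_setLIntegral_ball_div_lintegral_expWeight [IsProbabilityMeasure μ] {γ : ℝ}
    {δ : ℝ≥0∞} (hβ : 0 ≤ β) (hγ : 0 ≤ γ)
    (hδ : ENNReal.ofReal (Real.exp (-β * (γ / 2))) ≤ δ * μ (ball c (γ / 2))) :
    1 - δ ≤ (∫⁻ y in ball c γ, expWeight β c y ∂μ) / ∫⁻ y, expWeight β c y ∂μ := by
  have hsplit := lintegral_add_compl (μ := μ) (expWeight β c) (measurableSet_ball (x := c) (ε := γ))
  rw [← hsplit]
  exact ENNReal.one_sub_le_div_add_of_le_mul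
    (setLIntegral_compl_ball_expWeight_le_mul μ hβ hγ hδ)
    (hsplit ▸ lintegral_expWeight_ne_zero μ β c) (hsplit ▸ lintegral_expWeight_ne_top μ hβ)

end expWeight

theorem exp_mech_utility_general {X Y : Type*} [MetricSpace Y]
    [MeasurableSpace Y] [BorelSpace Y]
    (f : X → Y) (μ : Measure Y) [IsProbabilityMeasure μ]
    (γ δ : ℝ) (hγ : 0 < γ) (hδ : δ ∈ Set.Ioo (0:ℝ) 1)
    (m : ℝ) (hm : m = (⨅ y : Y, μ (Metric.ball y (γ / 2))).toReal)
    (hm0 : 0 < m) (hδm : δ * m < 1)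
    (β : ℝ) (hβ : β = (2 / γ) * Real.log (1 / (δ * m))) :
    (∀ x : X, (∫⁻ y, ENNReal.ofReal (Real.exp (-β * dist (f x) y)) ∂μ) ≠ 0 ∧
      (∫⁻ y, ENNReal.ofReal (Real.exp (-β * dist (f x) y)) ∂μ) ≠ ⊤) ∧
    (∀ x : X,
      ENNReal.ofReal (1 - δ) ≤
        (∫⁻ y in Metric.ball (f x) γ,
            ENNReal.ofReal (Real.exp (-β * dist (f x) y)) ∂μ) /
          (∫⁻ y, ENNReal.ofReal (Real.exp (-β * dist (f x) y)) ∂μ)) := by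
  obtain ⟨hδ0, -⟩ := hδ
  have hδm0 : 0 < δ * m := mul_pos hδ0 hm0
  have hβ0 : 0 ≤ β :=
    hβ ▸ mul_nonneg (by positivity) (Real.log_nonneg (one_le_one_div hδm0 hδm.le))
  have hexp : Real.exp (-β * (γ / 2)) = δ * m := by
    have hlog : -β * (γ / 2) = Real.log (δ * m) := by
      rw [hβ, one_div, Real.log_inv]; field_simp
    rw [hlog, Real.exp_log hδm0]
  refine ⟨fun x => ⟨lintegral_expWeight_ne_zero μ β (f x), lintegral_expWeight_ne_top μ hβ0⟩,
    fun x => ?_⟩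
  have hball : ENNReal.ofReal m ≤ μ (ball (f x) (γ / 2)) :=
    hm ▸ ENNReal.ofReal_toReal_le.trans (iInf_le _ _)
  rw [ENNReal.ofReal_sub _ hδ0.le, ENNReal.ofReal_one]
  refine one_sub_le_setLIntegral_ball_div_lintegral_expWeight μ hβ0 hγ.le ?_
  rw [hexp, ENNReal.ofReal_mul hδ0.le]
  gcongr

/-- for any function `f : X → Y`, a uniformly positive Borel probability
measure `μ` on `Y`, `γ > 0`, `δ ∈ (0,1)`, `m = inf_y μ(B(y,γ/2))` (with `m > 0`,
`δ·m < 1`) and `β = (2/γ)·ln(1/(δ·m))`, the conventional exponential mechanism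
`C^{μ;β}` is well defined and achieves `(γ,δ)`-utility. -/
theorem exp_mech_utility {X Y : Type*} [MetricSpace X] [MetricSpace Y]
    [MeasurableSpace Y] [BorelSpace Y]
    (f : X → Y) (μ : Measure Y) [IsProbabilityMeasure μ]
    (hμ : ∀ r > (0:ℝ), 0 < ⨅ y : Y, μ (Metric.ball y r))
    (γ δ : ℝ) (hγ : 0 < γ) (hδ : δ ∈ Set.Ioo (0:ℝ) 1)
    (m : ℝ) (hm : m = (⨅ y : Y, μ (Metric.ball y (γ / 2))).toReal)
    (hm0 : 0 < m) (hδm : δ * m < 1)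
    (β : ℝ) (hβ : β = (2 / γ) * Real.log (1 / (δ * m))) :
    (∀ x : X, (∫⁻ y, ENNReal.ofReal (Real.exp (-β * dist (f x) y)) ∂μ) ≠ 0 ∧
      (∫⁻ y, ENNReal.ofReal (Real.exp (-β * dist (f x) y)) ∂μ) ≠ ⊤) ∧
    (∀ x : X,
      ENNReal.ofReal (1 - δ) ≤
        (∫⁻ y in Metric.ball (f x) γ,
            ENNReal.ofReal (Real.exp (-β * dist (f x) y)) ∂μ) /
          (∫⁻ y, ENNReal.ofReal (Real.exp (-β * dist (f x) y)) ∂μ)) :=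
  exp_mech_utility_general f μ γ δ hγ hδ m hm hm0 hδm β hβ
end

section
/- Let (X, ρ) and (Y, σ) be metric spaces, let f : X → Y be 1-Lipschitz, and suppose there exists a uniformly positive Borel probability measure on Y. Then f is privacy-compatible: for every γ > 0 and every δ ∈ (0,1) there exist ε > 0 and a mechanism M : X → (Borel probability measures on Y) such that M achieves ε-differential privacy and (γ,δ)-utility, i.e. M_x(T) ≤ e^{ε·ρ(x,z)}·M_z(T) for all x, z ∈ X and Borel T ⊆ Y, and M_x(B(f(x),γ)) ≥ 1 − δ for all x ∈ X. -/
/-!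
The exponential mechanism works: reweight the uniformly positive measure `μ` by the density
`exp (-a σ(y, f x))` and normalise. Since `f` is 1-Lipschitz, moving `x` to `z` changes the
density, hence also the normalising constant, by a factor at most `exp (a ρ(x, z))`, which gives
`2a`-differential privacy. Outside `B(f x, γ)` the density is at most `exp (-a γ)`, while the
normalising constant is at least `exp (-a γ / 2) · inf_y μ(B(y, γ / 2))`; taking `a` large makes
the mass outside the ball at most `δ`.
-/

open MeasureTheory Metric Set
open scoped ENNReal

noncomputable section

section Normalization

variable {α : Type*} [MeasurableSpace α]

theorem inv_measure_univ_smul_le_of_le_smul {ν₁ ν₂ : Measure α} {c : ℝ≥0∞} (hc₀ : c ≠ 0)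
    (hc : c ≠ ∞) (h₁₂ : ν₁ ≤ c • ν₂) (h₂₁ : ν₂ ≤ c • ν₁) :
    (ν₁ univ)⁻¹ • ν₁ ≤ (c * c) • ((ν₂ univ)⁻¹ • ν₂) := by
  have hinv : (ν₁ univ)⁻¹ ≤ c * (ν₂ univ)⁻¹ := by
    rw [← div_eq_mul_inv, ← ENNReal.inv_div (Or.inl hc) (Or.inl hc₀), ENNReal.inv_le_inv,
      ENNReal.div_le_iff hc₀ hc, mul_comm]
    exact h₂₁ univ
  intro T
  simp only [Measure.smul_apply, smul_eq_mul]
  calc (ν₁ univ)⁻¹ * ν₁ T ≤ (c * (ν₂ univ)⁻¹) * (c * ν₂ T) := by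
        gcongr
        exact h₁₂ T
    _ = c * c * ((ν₂ univ)⁻¹ * ν₂ T) := by ring

theorem inv_measure_univ_smul_apply_le {ν : Measure α} [IsFiniteMeasure ν] {s : Set α}
    {η : ℝ≥0∞} (h : ν s ≤ η * ν univ) : ((ν univ)⁻¹ • ν) s ≤ η := by
  rcases eq_or_ne (ν univ) 0 with h0 | h0
  · simp [Measure.measure_univ_eq_zero.mp h0]
  · rw [Measure.smul_apply, smul_eq_mul, ENNReal.inv_mul_le_iff h0 (measure_ne_top _ _),
      mul_comm]
    exact h

theorem ofReal_one_sub_le_of_prob_compl_le {P : Measure α} [IsProbabilityMeasure P]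
    {s : Set α} (hs : MeasurableSet s) {δ : ℝ} (hδ : 0 ≤ δ) (h : P sᶜ ≤ ENNReal.ofReal δ) :
    ENNReal.ofReal (1 - δ) ≤ P s := by
  rw [prob_compl_eq_one_sub hs] at h
  rw [ENNReal.ofReal_sub _ hδ, ENNReal.ofReal_one]
  exact tsub_le_iff_tsub_le.mp h

end Normalization

theorem exists_pos_exp_neg_mul_le {r η : ℝ} (hr : 0 < r) (hη : 0 < η) :
    ∃ a > 0, Real.exp (-(a * r)) ≤ η := by
  refine ⟨(|Real.log η| + 1) / r, by positivity, ?_⟩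
  rw [div_mul_cancel₀ _ hr.ne', ← Real.le_log_iff_exp_le hη]
  linarith [neg_abs_le (Real.log η)]

section ExponentialMechanism

variable {Y : Type*} [PseudoMetricSpace Y] {a r : ℝ} {y y₀ : Y}

def expDistDensity (a : ℝ) (y₀ y : Y) : ℝ≥0∞ :=
  ENNReal.ofReal (Real.exp (-(a * dist y y₀)))

theorem expDistDensity_le_of_le (ha : 0 ≤ a) (h : r ≤ dist y y₀) :
    expDistDensity a y₀ y ≤ ENNReal.ofReal (Real.exp (-(a * r))) := by
  unfold expDistDensity
  gcongr

theorem le_expDistDensity_of_le (ha : 0 ≤ a) (h : dist y y₀ ≤ r) :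
    ENNReal.ofReal (Real.exp (-(a * r))) ≤ expDistDensity a y₀ y := by
  unfold expDistDensity
  gcongr

theorem expDistDensity_le_one (ha : 0 ≤ a) : expDistDensity a y₀ y ≤ 1 := by
  simpa using expDistDensity_le_of_le ha (dist_nonneg (x := y) (y := y₀))

theorem expDistDensity_le_mul (ha : 0 ≤ a) (y₁ y₂ y : Y) :
    expDistDensity a y₁ y ≤
      ENNReal.ofReal (Real.exp (a * dist y₁ y₂)) * expDistDensity a y₂ y := by
  unfold expDistDensity
  rw [← ENNReal.ofReal_mul (Real.exp_nonneg _), ← Real.exp_add]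
  gcongr
  nlinarith [dist_triangle y y₁ y₂]

theorem measurable_expDistDensity [MeasurableSpace Y] [OpensMeasurableSpace Y] (a : ℝ)
    (y₀ : Y) : Measurable (expDistDensity a y₀) := by
  unfold expDistDensity
  fun_prop

variable [MeasurableSpace Y] {μ : Measure Y}

def expWeightedMeasure (μ : Measure Y) (a : ℝ) (y₀ : Y) : Measure Y :=
  μ.withDensity (expDistDensity a y₀)

def expMechanism (μ : Measure Y) (a : ℝ) (y₀ : Y) : Measure Y :=
  (expWeightedMeasure μ a y₀ univ)⁻¹ • expWeightedMeasure μ a y₀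

theorem expWeightedMeasure_le (ha : 0 ≤ a) (y₀ : Y) : expWeightedMeasure μ a y₀ ≤ μ := by
  simpa [expWeightedMeasure] using
    withDensity_mono (μ := μ) (ae_of_all _ fun y => expDistDensity_le_one ha (y := y) (y₀ := y₀))

theorem isFiniteMeasure_expWeightedMeasure [IsFiniteMeasure μ] (ha : 0 ≤ a) :
    IsFiniteMeasure (expWeightedMeasure μ a y₀) :=
  isFiniteMeasure_of_le μ (expWeightedMeasure_le ha y₀)

instance neZero_expWeightedMeasure [OpensMeasurableSpace Y] [NeZero μ] :
    NeZero (expWeightedMeasure μ a y₀) := by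
  refine ⟨fun h => NeZero.ne μ ?_⟩
  have hpos : {y | expDistDensity a y₀ y ≠ 0} ∩ univ = univ := by
    ext y
    simp [expDistDensity, Real.exp_pos]
  rw [← Measure.measure_univ_eq_zero, ← hpos,
    ← withDensity_apply_eq_zero (measurable_expDistDensity a y₀)]
  exact Measure.measure_univ_eq_zero.mpr h

theorem isProbabilityMeasure_expMechanism [OpensMeasurableSpace Y] [IsFiniteMeasure μ]
    [NeZero μ] (ha : 0 ≤ a) : IsProbabilityMeasure (expMechanism μ a y₀) :=
  have := isFiniteMeasure_expWeightedMeasure (μ := μ) (y₀ := y₀) ha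
  isProbabilityMeasureSMul

theorem expWeightedMeasure_le_smul (ha : 0 ≤ a) (y₁ y₂ : Y) :
    expWeightedMeasure μ a y₁ ≤
      ENNReal.ofReal (Real.exp (a * dist y₁ y₂)) • expWeightedMeasure μ a y₂ := by
  rw [expWeightedMeasure, expWeightedMeasure, ← withDensity_smul' _ _ ENNReal.ofReal_ne_top]
  exact withDensity_mono (ae_of_all _ (expDistDensity_le_mul ha y₁ y₂))

theorem expMechanism_apply_le (ha : 0 ≤ a) (y₁ y₂ : Y) (T : Set Y) :
    expMechanism μ a y₁ T ≤
      ENNReal.ofReal (Real.exp (2 * a * dist y₁ y₂)) * expMechanism μ a y₂ T := by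
  have hE := ENNReal.ofReal_pos.mpr (Real.exp_pos (a * dist y₁ y₂))
  have key := inv_measure_univ_smul_le_of_le_smul hE.ne' ENNReal.ofReal_ne_top
    (expWeightedMeasure_le_smul (μ := μ) ha y₁ y₂)
    (dist_comm y₁ y₂ ▸ expWeightedMeasure_le_smul ha y₂ y₁) T
  rwa [← ENNReal.ofReal_mul (Real.exp_nonneg _), ← Real.exp_add, ← two_mul, ← mul_assoc] at key

variable [OpensMeasurableSpace Y]

theorem expWeightedMeasure_compl_ball_le (ha : 0 ≤ a) (y₀ : Y) (s : ℝ) :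
    expWeightedMeasure μ a y₀ (ball y₀ s)ᶜ ≤ ENNReal.ofReal (Real.exp (-(a * s))) * μ univ := by
  rw [expWeightedMeasure, withDensity_apply _ measurableSet_ball.compl]
  calc ∫⁻ y in (ball y₀ s)ᶜ, expDistDensity a y₀ y ∂μ
      ≤ ∫⁻ _ in (ball y₀ s)ᶜ, ENNReal.ofReal (Real.exp (-(a * s))) ∂μ :=
        setLIntegral_mono measurable_const fun y hy =>
          expDistDensity_le_of_le ha (by simpa using hy)
    _ ≤ ENNReal.ofReal (Real.exp (-(a * s))) * μ univ := by
        rw [setLIntegral_const]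
        gcongr
        exact subset_univ _

theorem ofReal_exp_mul_measure_ball_le (ha : 0 ≤ a) (y₀ : Y) (r : ℝ) :
    ENNReal.ofReal (Real.exp (-(a * r))) * μ (ball y₀ r) ≤ expWeightedMeasure μ a y₀ univ := by
  calc ENNReal.ofReal (Real.exp (-(a * r))) * μ (ball y₀ r)
      = ∫⁻ _ in ball y₀ r, ENNReal.ofReal (Real.exp (-(a * r))) ∂μ :=
        (setLIntegral_const _ _).symm
    _ ≤ ∫⁻ y in ball y₀ r, expDistDensity a y₀ y ∂μ :=
        setLIntegral_mono (measurable_expDistDensity a y₀) fun y hy =>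
          le_expDistDensity_of_le ha (mem_ball.mp hy).le
    _ ≤ expWeightedMeasure μ a y₀ univ :=
        (withDensity_apply_le _ _).trans (measure_mono (subset_univ _))

theorem expMechanism_compl_ball_le [IsFiniteMeasure μ] (ha : 0 ≤ a) {s : ℝ} {η : ℝ≥0∞}
    (h : ENNReal.ofReal (Real.exp (-(a * (s - r)))) * μ univ ≤ η * μ (ball y₀ r)) :
    expMechanism μ a y₀ (ball y₀ s)ᶜ ≤ η := by
  have := isFiniteMeasure_expWeightedMeasure (μ := μ) (y₀ := y₀) ha
  have hsplit : ENNReal.ofReal (Real.exp (-(a * s))) =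
      ENNReal.ofReal (Real.exp (-(a * (s - r)))) * ENNReal.ofReal (Real.exp (-(a * r))) := by
    rw [← ENNReal.ofReal_mul (Real.exp_nonneg _), ← Real.exp_add]
    ring_nf
  refine inv_measure_univ_smul_apply_le ?_
  calc expWeightedMeasure μ a y₀ (ball y₀ s)ᶜ
      ≤ ENNReal.ofReal (Real.exp (-(a * (s - r)))) * μ univ *
          ENNReal.ofReal (Real.exp (-(a * r))) := by
        rw [mul_right_comm, ← hsplit]
        exact expWeightedMeasure_compl_ball_le ha y₀ s
    _ ≤ η * μ (ball y₀ r) * ENNReal.ofReal (Real.exp (-(a * r))) :=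
        mul_le_mul_of_nonneg_right h zero_le
    _ = η * (ENNReal.ofReal (Real.exp (-(a * r))) * μ (ball y₀ r)) := by ring
    _ ≤ η * expWeightedMeasure μ a y₀ univ := by
        gcongr
        exact ofReal_exp_mul_measure_ball_le ha y₀ r

end ExponentialMechanism

/-- if `f : X → Y` is 1-Lipschitz and there exists a uniformly positive
Borel probability measure on `Y`, then `f` is privacy-compatible: for every `γ > 0`
and `δ ∈ (0,1)` there is an `ε > 0` and a mechanism achieving `ε`-differential privacy
and `(γ,δ)`-utility. -/
theorem privacy_compatible_of_uniformly_positive {X Y : Type*}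
    [MetricSpace X] [MetricSpace Y] [MeasurableSpace Y] [BorelSpace Y]
    (f : X → Y) (hf : ∀ x z : X, dist (f x) (f z) ≤ dist x z)
    (hpos : ∃ μ : Measure Y, IsProbabilityMeasure μ ∧
      ∀ r > (0:ℝ), 0 < ⨅ y : Y, μ (Metric.ball y r))
    (γ δ : ℝ) (hγ : 0 < γ) (hδ : δ ∈ Set.Ioo (0:ℝ) 1) :
    ∃ ε > (0:ℝ), ∃ M : X → Measure Y,
      (∀ x, IsProbabilityMeasure (M x)) ∧
      (∀ x z : X, ∀ T : Set Y, MeasurableSet T →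
        M x T ≤ ENNReal.ofReal (Real.exp (ε * dist x z)) * M z T) ∧
      (∀ x : X, ENNReal.ofReal (1 - δ) ≤ M x (Metric.ball (f x) γ)) := by
  obtain ⟨μ, hμ, hμpos⟩ := hpos
  obtain ⟨hδ₀, -⟩ := hδ
  set c := ⨅ y : Y, μ (ball y (γ / 2))
  have hc₀ : c ≠ 0 := (hμpos (γ / 2) (half_pos hγ)).ne'
  -- `c` is finite because `Y` is nonempty; an infimum over an empty type would be `∞`.
  have hc : c ≠ ∞ := ne_top_of_le_ne_top ENNReal.one_ne_top <|
    iInf_le_of_le (nonempty_of_isProbabilityMeasure μ).some prob_le_one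
  obtain ⟨a, ha, hexp⟩ :=
    exists_pos_exp_neg_mul_le (half_pos hγ) (mul_pos hδ₀ (ENNReal.toReal_pos hc₀ hc))
  have hprob (x : X) := isProbabilityMeasure_expMechanism (μ := μ) (y₀ := f x) ha.le
  refine ⟨2 * a, by positivity, fun x => expMechanism μ a (f x), hprob, fun x z T _ => ?_,
    fun x => ?_⟩
  · refine (expMechanism_apply_le ha.le (f x) (f z) T).trans ?_
    gcongr
    exact hf x z
  · refine ofReal_one_sub_le_of_prob_compl_le measurableSet_ball hδ₀.le
      (expMechanism_compl_ball_le (r := γ / 2) ha.le ?_)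
    rw [measure_univ, mul_one, sub_half]
    calc ENNReal.ofReal (Real.exp (-(a * (γ / 2)))) ≤ ENNReal.ofReal δ * c := by
          rw [← ENNReal.ofReal_toReal hc, ← ENNReal.ofReal_mul hδ₀.le]
          exact ENNReal.ofReal_le_ofReal hexp
      _ ≤ ENNReal.ofReal δ * μ (ball (f x) (γ / 2)) := by
          gcongr
          exact iInf_le _ _
end
end

section
/- Let (Y, σ) be a nonempty metric space that is totally bounded (equivalently, whose completion is compact). Then there exists a uniformly positive Borel probability measure μ on Y, i.e. a Borel probability measure μ such that for every r > 0 there is a constant c > 0 with μ(B(y,r)) ≥ c for every y ∈ Y. -/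
open MeasureTheory ENNReal

/-!
For each scale `1/(n+1)` the uniform distribution on a finite `1/(n+1)`-net gives every ball of
that radius mass at least `1 / #net`. A geometric mixture of these countably many probability
measures is again a probability measure and inherits all of these lower bounds, up to the weights.
-/

namespace MeasureTheory.Measure

variable {X : Type*} [MeasurableSpace X]

noncomputable def geometricMixture (ν : ℕ → Measure X) : Measure X :=
  sum fun n => (2⁻¹ : ℝ≥0∞) ^ (n + 1) • ν n

lemma smul_le_geometricMixture (ν : ℕ → Measure X) (n : ℕ) :
    (2⁻¹ : ℝ≥0∞) ^ (n + 1) • ν n ≤ geometricMixture ν :=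
  le_sum _ n

instance isProbabilityMeasure_geometricMixture (ν : ℕ → Measure X)
    [∀ n, IsProbabilityMeasure (ν n)] : IsProbabilityMeasure (geometricMixture ν) := by
  constructor
  calc geometricMixture ν Set.univ = ∑' n : ℕ, (2⁻¹ : ℝ≥0∞) ^ (n + 1) := by
        simp only [geometricMixture, sum_apply _ MeasurableSet.univ, smul_apply, measure_univ,
          smul_eq_mul, mul_one]
    _ = 1 := by
        rw [ENNReal.tsum_geometric_add_one, ENNReal.one_sub_inv_two, inv_inv,
          ENNReal.inv_mul_cancel two_ne_zero ofNat_ne_top]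

end MeasureTheory.Measure

section UniformlyPositive

open Metric

variable {Y : Type*} [PseudoMetricSpace Y] [MeasurableSpace Y]

def UniformlyPositiveAt (μ : Measure Y) (r : ℝ) : Prop :=
  ∃ c : ℝ≥0∞, 0 < c ∧ ∀ y, c ≤ μ (ball y r)

lemma UniformlyPositiveAt.mono {μ : Measure Y} {r s : ℝ} (h : UniformlyPositiveAt μ r)
    (hrs : r ≤ s) : UniformlyPositiveAt μ s :=
  let ⟨c, hc, hμ⟩ := h
  ⟨c, hc, fun y => (hμ y).trans (measure_mono (ball_subset_ball hrs))⟩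

lemma UniformlyPositiveAt.mono_measure {μ ν : Measure Y} {r : ℝ} (h : UniformlyPositiveAt μ r)
    (hμν : μ ≤ ν) : UniformlyPositiveAt ν r :=
  let ⟨c, hc, hμ⟩ := h
  ⟨c, hc, fun y => (hμ y).trans (hμν _)⟩

lemma UniformlyPositiveAt.smul {μ : Measure Y} {r : ℝ} (h : UniformlyPositiveAt μ r)
    {a : ℝ≥0∞} (ha : a ≠ 0) : UniformlyPositiveAt (a • μ) r :=
  let ⟨c, hc, hμ⟩ := h
  ⟨a * c, ENNReal.mul_pos ha hc.ne', fun y => mul_le_mul_right (hμ y) a⟩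

lemma uniformlyPositiveAt_uniformOfFinset {r : ℝ} (s : Finset Y) (hs : s.Nonempty)
    (hcover : ∀ y, ∃ x ∈ s, dist y x < r) :
    UniformlyPositiveAt (PMF.uniformOfFinset s hs).toMeasure r := by
  refine ⟨(s.card : ℝ≥0∞)⁻¹, ENNReal.inv_pos.2 (natCast_ne_top _), fun y => ?_⟩
  obtain ⟨x, hxs, hxy⟩ := hcover y
  calc (s.card : ℝ≥0∞)⁻¹ = (PMF.uniformOfFinset s hs).toOuterMeasure {x} := by
        rw [PMF.toOuterMeasure_apply_singleton, PMF.uniformOfFinset_apply_of_mem (ha := hxs)]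
    _ ≤ (PMF.uniformOfFinset s hs).toOuterMeasure (ball y r) :=
        measure_mono (Set.singleton_subset_iff.2 (mem_ball'.2 hxy))
    _ ≤ _ := PMF.toOuterMeasure_apply_le_toMeasure_apply _ _

lemma exists_isProbabilityMeasure_uniformlyPositiveAt [Nonempty Y]
    (hY : TotallyBounded (Set.univ : Set Y)) {r : ℝ} (hr : 0 < r) :
    ∃ μ : Measure Y, IsProbabilityMeasure μ ∧ UniformlyPositiveAt μ r := by
  obtain ⟨t, ht, hcover⟩ := totallyBounded_iff.1 hY r hr
  have hcover' : ∀ y, ∃ x ∈ ht.toFinset, dist y x < r := fun y => by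
    simpa using hcover (Set.mem_univ y)
  have hne : ht.toFinset.Nonempty :=
    let ⟨x, hx, _⟩ := hcover' (Classical.arbitrary Y)
    ⟨x, hx⟩
  exact ⟨_, inferInstance, uniformlyPositiveAt_uniformOfFinset _ hne hcover'⟩

end UniformlyPositive

theorem exists_uniformly_positive_of_totallyBounded_general {Y : Type*} [MetricSpace Y]
    [Nonempty Y] [MeasurableSpace Y]
    (hY : TotallyBounded (Set.univ : Set Y)) :
    ∃ μ : Measure Y, IsProbabilityMeasure μ ∧
      ∀ r > (0:ℝ), ∃ c : ℝ≥0∞, 0 < c ∧ ∀ y : Y, c ≤ μ (Metric.ball y r) := by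
  choose ν hν hpos using fun n : ℕ =>
    exists_isProbabilityMeasure_uniformlyPositiveAt hY (Nat.one_div_pos_of_nat (n := n))
  refine ⟨Measure.geometricMixture ν, inferInstance, fun r hr => ?_⟩
  obtain ⟨n, hn⟩ := exists_nat_one_div_lt hr
  exact (((hpos n).smul (pow_ne_zero _ (by norm_num))).mono_measure
    (Measure.smul_le_geometricMixture ν n)).mono hn.le

/-- a nonempty totally bounded metric space carries a uniformly positive
Borel probability measure. -/
theorem exists_uniformly_positive_of_totallyBounded {Y : Type*} [MetricSpace Y]
    [Nonempty Y] [MeasurableSpace Y] [BorelSpace Y]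
    (hY : TotallyBounded (Set.univ : Set Y)) :
    ∃ μ : Measure Y, IsProbabilityMeasure μ ∧
      ∀ r > (0:ℝ), ∃ c : ℝ≥0∞, 0 < c ∧ ∀ y : Y, c ≤ μ (Metric.ball y r) :=
  exists_uniformly_positive_of_totallyBounded_general hY
end

section
/- Let (X, ρ) and (Y, σ) be metric spaces with ρ(x,z) ≤ 1 for all x, z ∈ X, let f : X → Y, and suppose there exist r > 0 and a sequence of points x_1, x_2, … in X such that the open balls B(f(x_i), r) ⊆ Y are pairwise disjoint. Then for every mechanism M : X → (Borel probability measures on Y) satisfying M_x(B(f(x), r)) ≥ 1/2 for all x ∈ X, and for every α > 0, M fails α-differential privacy: there exist indices and a Borel set T ⊆ Y — namely some of the sets B(f(x_i), r) — with M_{x_i}(T) > e^{α·ρ(x_i, x_1)} · M_{x_1}(T). -/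
open MeasureTheory ENNReal Filter Topology Function

/- Since `e^{α ρ(x_i, x_1)} ≤ e^α`, privacy would force `M_{x_1}(B(f(x_i), r)) ≥ e^{-α}/2` for
every `i`. The balls are disjoint, so these masses are summable against the probability
measure `M_{x_1}` and must tend to `0`; hence some ball is too light for `M_{x_1}`, while it
carries mass at least `1/2` under `M_{x_i}`. -/

theorem MeasureTheory.tendsto_measure_cofinite_zero_of_pairwise_disjoint {α ι : Type*}
    [MeasurableSpace α] (μ : Measure α) [IsFiniteMeasure μ] {s : ι → Set α}
    (hs : ∀ i, MeasurableSet (s i)) (hdisj : Pairwise (Disjoint on s)) :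
    Tendsto (fun i => μ (s i)) cofinite (𝓝 0) :=
  ENNReal.tendsto_cofinite_zero_of_tsum_ne_top <|
    ne_top_of_le_ne_top (measure_ne_top μ (⋃ i, s i))
      (tsum_meas_le_meas_iUnion_of_disjoint μ hs hdisj)

theorem no_privacy_of_disjoint_balls_general {X Y : Type*} [MetricSpace X] [MetricSpace Y]
    [MeasurableSpace Y] [BorelSpace Y]
    (hX : ∀ x z : X, dist x z ≤ 1)
    (f : X → Y) (r : ℝ) (x : ℕ → X)
    (hdisj : Pairwise fun i j => Disjoint (Metric.ball (f (x i)) r) (Metric.ball (f (x j)) r))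
    (M : X → Measure Y) (hM : ∀ a, IsProbabilityMeasure (M a))
    (hut : ∀ a : X, (1 : ℝ≥0∞) / 2 ≤ M a (Metric.ball (f a) r))
    (α : ℝ) (hα : 0 < α) :
    ∃ i : ℕ,
      ENNReal.ofReal (Real.exp (α * dist (x i) (x 0))) *
          M (x 0) (Metric.ball (f (x i)) r) <
        M (x i) (Metric.ball (f (x i)) r) := by
  have hsmall : Tendsto (fun i => M (x 0) (Metric.ball (f (x i)) r)) cofinite (𝓝 0) :=
    tendsto_measure_cofinite_zero_of_pairwise_disjoint _ (fun _ => measurableSet_ball) hdisj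
  have hpos : (0 : ℝ≥0∞) < 1 / 2 / ENNReal.ofReal (Real.exp α) := by simp
  obtain ⟨i, hi⟩ := (hsmall.eventually (gt_mem_nhds hpos)).exists
  refine ⟨i, ?_⟩
  calc ENNReal.ofReal (Real.exp (α * dist (x i) (x 0))) * M (x 0) (Metric.ball (f (x i)) r)
      ≤ ENNReal.ofReal (Real.exp α) * M (x 0) (Metric.ball (f (x i)) r) := by
        gcongr
        exact mul_le_of_le_one_right hα.le (hX _ _)
    _ < 1 / 2 := ENNReal.mul_lt_of_lt_div' hi
    _ ≤ M (x i) (Metric.ball (f (x i)) r) := hut (x i)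

/-- if `X` has diameter at most `1`, and there is a sequence of points whose
images under `f` are centers of pairwise disjoint balls of radius `r`, then any mechanism
achieving `r`-utility with probability at least `1/2` fails `α`-differential privacy for
every `α > 0`, witnessed on one of the balls `B(f(x_i), r)`. -/
theorem no_privacy_of_disjoint_balls {X Y : Type*} [MetricSpace X] [MetricSpace Y]
    [MeasurableSpace Y] [BorelSpace Y]
    (hX : ∀ x z : X, dist x z ≤ 1)
    (f : X → Y) (r : ℝ) (hr : 0 < r) (x : ℕ → X)
    (hdisj : Pairwise fun i j => Disjoint (Metric.ball (f (x i)) r) (Metric.ball (f (x j)) r))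
    (M : X → Measure Y) (hM : ∀ a, IsProbabilityMeasure (M a))
    (hut : ∀ a : X, (1 : ℝ≥0∞) / 2 ≤ M a (Metric.ball (f a) r))
    (α : ℝ) (hα : 0 < α) :
    ∃ i : ℕ,
      ENNReal.ofReal (Real.exp (α * dist (x i) (x 0))) *
          M (x 0) (Metric.ball (f (x i)) r) <
        M (x i) (Metric.ball (f (x i)) r) :=
  no_privacy_of_disjoint_balls_general hX f r x hdisj M hM hut α hα
end
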